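/- Let A be a right strongly semiprime ring and X a right A-module. If there exists an essential right ideal B of A such that X is injective with respect to the module B_A, then X is an injective module. -/

import Mathlib

/-!
The two-sided ideal generated by an essential right ideal `B` is again essential, so strong
semiprimeness yields finitely many `b₁, …, bₙ ∈ B` with zero common right annihilator. Then
`a ↦ (bᵢ a)ᵢ` embeds `A_A` into `Bⁿ`. Relative injectivity passes to finite products and to
submodules, so `X` is `A_A`-injective, which is Baer's criterion.
-/

open MulOpposite

open MulOpposite

/-- The right annihilator `r(x) = {a : A | x·a = 0}` of an element `x` of a right `A`-module `X`,
as a right ideal of `A`. -/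
def rightAnn (A : Type*) [Ring A] {X : Type*} [AddCommGroup X] [Module Aᵐᵒᵖ X]
    (x : X) : Submodule Aᵐᵒᵖ A where
  carrier := {a : A | op a • x = 0}
  add_mem' := by
    intro a b ha hb
    simp only [Set.mem_setOf_eq] at *
    rw [op_add, add_smul, ha, hb, add_zero]
  zero_mem' := by simp
  smul_mem' := by
    intro c a ha
    simp only [Set.mem_setOf_eq] at *
    have h1 : c • a = a * c.unop := rfl
    rw [h1]
    have h2 : op (a * c.unop) = c * op a := by
      simp [MulOpposite.op_mul]
    rw [h2, mul_smul, ha, smul_zero]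

/-- A right ideal `B` of `A` is essential if it has non-zero intersection with every
non-zero right ideal of `A`. -/
def IsEssentialRightIdeal (A : Type*) [Ring A] (B : Submodule Aᵐᵒᵖ A) : Prop :=
  ∀ C : Submodule Aᵐᵒᵖ A, C ≠ ⊥ → B ⊓ C ≠ ⊥

/-- A right `A`-module `X` is non-singular if its singular submodule is zero, i.e. the only
element of `X` whose right annihilator is an essential right ideal of `A` is `0`. -/
def IsNonsingularMod (A : Type*) [Ring A] (X : Type*) [AddCommGroup X] [Module Aᵐᵒᵖ X] : Prop :=
  ∀ x : X, IsEssentialRightIdeal A (rightAnn A x) → x = 0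

/-- The Goldie radical (second singular submodule) `G(X)` of a right `A`-module `X`: the
intersection of all submodules `Y ⊆ X` such that `X/Y` is non-singular. -/
def goldieRadical (A : Type*) [Ring A] (X : Type*) [AddCommGroup X] [Module Aᵐᵒᵖ X] :
    Submodule Aᵐᵒᵖ X :=
  sInf {Y : Submodule Aᵐᵒᵖ X | IsNonsingularMod A (X ⧸ Y)}

/-- A module `X` is injective with respect to a module `Y` (`Y`-injective) if every homomorphism
from a submodule of `Y` to `X` extends to a homomorphism `Y → X`. -/
def IsInjectiveWrt (R : Type*) [Ring R] (X : Type*) [AddCommGroup X] [Module R X]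
    (Y : Type*) [AddCommGroup Y] [Module R Y] : Prop :=
  ∀ (Y₁ : Submodule R Y) (f : Y₁ →ₗ[R] X), ∃ g : Y →ₗ[R] X, ∀ y : Y₁, g y = f y

/-- A ring `A` is right strongly semiprime if every two-sided ideal of `A` which is essential
as a right ideal contains a finite subset with zero right annihilator. -/
def IsRightStronglySemiprime (A : Type*) [Ring A] : Prop :=
  ∀ T : TwoSidedIdeal A,
    (∀ C : Submodule Aᵐᵒᵖ A, C ≠ ⊥ → ∃ x ∈ C, x ≠ 0 ∧ x ∈ T) →
    ∃ K : Finset A, (K : Set A) ⊆ (T : Set A) ∧ ∀ a : A, (∀ k ∈ K, k * a = 0) → a = 0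

open Function

namespace IsInjectiveWrt

variable {R : Type*} [Ring R] {X : Type*} [AddCommGroup X] [Module R X]
  {Y : Type*} [AddCommGroup Y] [Module R Y]

theorem exists_comp_eq_of_injective (h : IsInjectiveWrt R X Y) {Z : Type*} [AddCommGroup Z]
    [Module R Z] {i : Z →ₗ[R] Y} (hi : Injective i) (f : Z →ₗ[R] X) :
    ∃ g : Y →ₗ[R] X, g ∘ₗ i = f := by
  let e := LinearEquiv.ofInjective i hi
  obtain ⟨g, hg⟩ := h (LinearMap.range i) (f ∘ₗ e.symm.toLinearMap)
  exact ⟨g, LinearMap.ext fun z => by simpa [e] using hg (e z)⟩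

theorem exists_comp_eq_of_ker_le (h : IsInjectiveWrt R X Y) {W : Type*} [AddCommGroup W]
    [Module R W] (p : W →ₗ[R] Y) (f : W →ₗ[R] X) (hpf : LinearMap.ker p ≤ LinearMap.ker f) :
    ∃ g : Y →ₗ[R] X, g ∘ₗ p = f := by
  have hinj : Injective ((LinearMap.ker p).liftQ p le_rfl) := by
    rw [← LinearMap.ker_eq_bot]
    exact Submodule.ker_liftQ_eq_bot _ _ _ le_rfl
  obtain ⟨g, hg⟩ := h.exists_comp_eq_of_injective hinj ((LinearMap.ker p).liftQ f hpf)
  exact ⟨g, LinearMap.ext fun w => by simpa using LinearMap.congr_fun hg (Submodule.Quotient.mk w)⟩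

theorem of_injective {Y' : Type*} [AddCommGroup Y'] [Module R Y'] {i : Y' →ₗ[R] Y}
    (hi : Injective i) (h : IsInjectiveWrt R X Y) : IsInjectiveWrt R X Y' := by
  intro W f
  obtain ⟨g, hg⟩ :=
    h.exists_comp_eq_of_injective (i := i ∘ₗ W.subtype) (hi.comp W.injective_subtype) f
  exact ⟨g ∘ₗ i, LinearMap.congr_fun hg⟩

theorem of_subsingleton [Subsingleton Y] : IsInjectiveWrt R X Y :=
  fun _ _ => ⟨0, fun y => by simp [Subsingleton.elim y 0]⟩

/- Extend `f` from `W ∩ (0 × Y₂)` to `g₂` on `Y₂`; then `f - g₂ ∘ snd` vanishes on the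
kernel of `fst : W → Y₁`, so it factors through `Y₁`. -/
theorem prod {Y₁ Y₂ : Type*} [AddCommGroup Y₁] [Module R Y₁] [AddCommGroup Y₂] [Module R Y₂]
    (h₁ : IsInjectiveWrt R X Y₁) (h₂ : IsInjectiveWrt R X Y₂) :
    IsInjectiveWrt R X (Y₁ × Y₂) := by
  intro W f
  let j : W.comap (LinearMap.inr R Y₁ Y₂) →ₗ[R] W :=
    (LinearMap.inr R Y₁ Y₂).restrict fun _ hy => hy
  obtain ⟨g₂, hg₂⟩ := h₂ _ (f ∘ₗ j)
  let f' := f - g₂ ∘ₗ LinearMap.snd R Y₁ Y₂ ∘ₗ W.subtype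
  have hker : LinearMap.ker (LinearMap.fst R Y₁ Y₂ ∘ₗ W.subtype) ≤ LinearMap.ker f' := by
    rintro ⟨⟨y₁, y₂⟩, hy⟩ (hy₁ : y₁ = 0)
    subst hy₁
    exact sub_eq_zero.2 (hg₂ ⟨y₂, hy⟩).symm
  obtain ⟨g₁, hg₁⟩ := h₁.exists_comp_eq_of_ker_le _ f' hker
  refine ⟨g₁ ∘ₗ LinearMap.fst R Y₁ Y₂ + g₂ ∘ₗ LinearMap.snd R Y₁ Y₂, fun w => ?_⟩
  simpa [f', eq_sub_iff_add_eq] using LinearMap.congr_fun hg₁ w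

theorem pi_fin :
    ∀ {n : ℕ} {Y : Fin n → Type*} [∀ i, AddCommGroup (Y i)] [∀ i, Module R (Y i)],
      (∀ i, IsInjectiveWrt R X (Y i)) → IsInjectiveWrt R X (∀ i, Y i)
  | 0, _, _, _, _ => of_subsingleton
  | _ + 1, Y, _, _, h =>
    ((h 0).prod (pi_fin fun i => h i.succ)).of_injective (Fin.consLinearEquiv R Y).symm.injective

theorem pi {ι : Type*} [Finite ι] {Y : ι → Type*} [∀ i, AddCommGroup (Y i)]
    [∀ i, Module R (Y i)] (h : ∀ i, IsInjectiveWrt R X (Y i)) :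
    IsInjectiveWrt R X (∀ i, Y i) := by
  obtain ⟨n, ⟨e⟩⟩ := Finite.exists_equiv_fin ι
  exact (pi_fin fun j => h (e.symm j)).of_injective (LinearEquiv.piCongrLeft' R Y e).injective

theorem baer (h : IsInjectiveWrt R X R) : Module.Baer R X :=
  fun I g => let ⟨g', hg'⟩ := h I g; ⟨g', fun x hx => hg' ⟨x, hx⟩⟩

end IsInjectiveWrt

theorem exists_finset_forall_mul_eq_zero_of_mem_span {A : Type*} [Ring A]
    (B : Submodule Aᵐᵒᵖ A) {k : A} (hk : k ∈ TwoSidedIdeal.span (B : Set A)) :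
    ∃ F : Finset A, (F : Set A) ⊆ B ∧ ∀ c, (∀ b ∈ F, b * c = 0) → k * c = 0 := by
  classical
  induction hk using TwoSidedIdeal.span_induction with
  | mem b hb => exact ⟨{b}, by simpa using hb, fun c hc => hc b (Finset.mem_singleton_self b)⟩
  | zero => exact ⟨∅, by simp, fun c _ => zero_mul c⟩
  | add x y _ _ hx hy =>
    obtain ⟨F, hFB, hF⟩ := hx
    obtain ⟨G, hGB, hG⟩ := hy
    refine ⟨F ∪ G, by simpa using ⟨hFB, hGB⟩, fun c hc => ?_⟩
    rw [add_mul, hF c fun b hb => hc b (by simp [hb]), hG c fun b hb => hc b (by simp [hb]),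
      add_zero]
  | neg x _ hx =>
    obtain ⟨F, hFB, hF⟩ := hx
    exact ⟨F, hFB, fun c hc => by rw [neg_mul, hF c hc, neg_zero]⟩
  | left_absorb a x _ hx =>
    obtain ⟨F, hFB, hF⟩ := hx
    exact ⟨F, hFB, fun c hc => by rw [mul_assoc, hF c hc, mul_zero]⟩
  | right_absorb a x _ hx =>
    -- `B` is a right ideal, so `F * a ⊆ B`
    obtain ⟨F, hFB, hF⟩ := hx
    refine ⟨F.image (· * a), ?_, fun c hc => ?_⟩
    · simpa [Set.subset_def] using fun b hb => B.smul_mem (op a) (hFB hb)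
    · rw [mul_assoc]
      exact hF (a * c) fun b hb => by
        simpa [mul_assoc] using hc (b * a) (Finset.mem_image_of_mem _ hb)

theorem IsRightStronglySemiprime.exists_finset_of_isEssential {A : Type*} [Ring A]
    (hA : IsRightStronglySemiprime A) {B : Submodule Aᵐᵒᵖ A} (hB : IsEssentialRightIdeal A B) :
    ∃ S : Finset A, (S : Set A) ⊆ B ∧ ∀ c, (∀ b ∈ S, b * c = 0) → c = 0 := by
  classical
  obtain ⟨K, hKT, hK⟩ := hA (TwoSidedIdeal.span B) fun C hC => by
    obtain ⟨x, ⟨hxB, hxC⟩, hx0⟩ := (Submodule.ne_bot_iff _).mp (hB C hC)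
    exact ⟨x, hxC, hx0, TwoSidedIdeal.subset_span hxB⟩
  choose F hFB hF using fun k : K => exists_finset_forall_mul_eq_zero_of_mem_span B (hKT k.2)
  refine ⟨Finset.univ.biUnion F, by simpa [Set.iUnion_subset_iff] using hFB, fun c hc => ?_⟩
  exact hK c fun k hk => hF ⟨k, hk⟩ c fun b hb =>
    hc b (Finset.mem_biUnion.2 ⟨_, Finset.mem_univ _, hb⟩)

/-- Over a right strongly semiprime ring `A`, a module which is injective with
respect to some essential right ideal of `A` is injective. -/
theorem stmt8 (A : Type u) [Ring A] (hA : IsRightStronglySemiprime A)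
    (X : Type v) [AddCommGroup X] [Module Aᵐᵒᵖ X]
    (B : Submodule Aᵐᵒᵖ A) (hBess : IsEssentialRightIdeal A B)
    (hBinj : IsInjectiveWrt Aᵐᵒᵖ X ↥B) :
    Module.Injective Aᵐᵒᵖ X := by
  obtain ⟨S, hSB, hS⟩ := hA.exists_finset_of_isEssential hBess
  let ψ : Aᵐᵒᵖ →ₗ[Aᵐᵒᵖ] (S → B) :=
    LinearMap.pi fun s => LinearMap.toSpanSingleton Aᵐᵒᵖ B ⟨s, hSB s.2⟩
  have hψ : Injective ψ := by
    refine (injective_iff_map_eq_zero ψ).2 fun m hm => ?_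
    have : m.unop = 0 := hS m.unop fun b hb => congr_arg Subtype.val (congr_fun hm ⟨b, hb⟩)
    simpa using congr_arg op this
  exact Module.Baer.injective ((IsInjectiveWrt.pi fun _ => hBinj).of_injective hψ).baer
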